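/- The Takagi function T(x) = Σ_{n=0}^∞ 2^{-n} dist(2ⁿx, ℤ) has infinite total variation on every nondegenerate subinterval [a,b] of [0,1]. -/

import Mathlib

/-!
Let `φ(y) = dist(y, ℤ)`. On the dyadic interval `[k/2^N, (k+1)/2^N]` containing `x`, the summands
`2^{-n} φ(2^n ·)` with `n < N` are affine of slope `±1`, the sign being `(-1)^⌊2^{n+1} x⌋`, and
those with `n ≥ N` vanish at both endpoints. So the slope of `T` over that interval is the integer
`D_N = Σ_{n<N} (-1)^⌊2^{n+1} x⌋`, and `D_{N+1} - D_N = ±1`. Were `T` differentiable at `x`, the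
slopes over these shrinking intervals straddling `x` would converge to `T'(x)`; hence `T` is nowhere
differentiable. By Lebesgue's theorem a function of bounded variation on `[a, b]` is differentiable
almost everywhere there, so the variation of `T` on any nondegenerate interval is infinite.
-/

/-- The Takagi function `T(x) = Σ 2^{-n} dist(2ⁿ x, ℤ)`. -/
noncomputable def takagi (x : ℝ) : ℝ :=
  ∑' n : ℕ, (2:ℝ)⁻¹ ^ n * |2 ^ n * x - round (2 ^ n * x)|

open Set Filter Topology MeasureTheory

theorem HasDerivAt.tendsto_slope_of_le_of_le {F : Type*} [NormedAddCommGroup F] [NormedSpace ℝ F]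
    {f : ℝ → F} {c : F} {x : ℝ} (hf : HasDerivAt f c x) {ι : Type*} {l : Filter ι} {u v : ι → ℝ}
    (hux : ∀ i, u i ≤ x) (hxv : ∀ i, x ≤ v i) (huv : ∀ i, u i < v i)
    (hlen : Tendsto (fun i ↦ v i - u i) l (𝓝 0)) :
    Tendsto (fun i ↦ slope f (u i) (v i)) l (𝓝 c) := by
  have hu : Tendsto u l (𝓝 x) := by
    refine tendsto_of_tendsto_of_tendsto_of_le_of_le (g := fun i ↦ x - (v i - u i))
      (by simpa using hlen.const_sub x) tendsto_const_nhds (fun i ↦ ?_) hux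
    linarith [hxv i]
  have hv : Tendsto v l (𝓝 x) := by
    refine tendsto_of_tendsto_of_tendsto_of_le_of_le (h := fun i ↦ x + (v i - u i))
      tendsto_const_nhds (by simpa using hlen.const_add x) hxv (fun i ↦ ?_)
    linarith [hux i]
  rw [Metric.tendsto_nhds]
  intro ε hε
  have hsmall := (hasDerivAt_iff_isLittleO.mp hf).def (half_pos hε)
  filter_upwards [hu.eventually hsmall, hv.eventually hsmall] with i hui hvi
  have hpos : 0 < v i - u i := sub_pos.mpr (huv i)
  have hsplit : (v i - u i) • (slope f (u i) (v i) - c) =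
      (f (v i) - f x - (v i - x) • c) - (f (u i) - f x - (u i - x) • c) := by
    rw [smul_sub, sub_smul_slope, vsub_eq_sub, sub_smul, sub_smul, sub_smul]
    abel
  have hbound : (v i - u i) * ‖slope f (u i) (v i) - c‖ ≤ ε / 2 * (v i - u i) := by
    rw [← Real.norm_of_nonneg hpos.le, ← norm_smul, hsplit]
    calc _ ≤ ‖f (v i) - f x - (v i - x) • c‖ + ‖f (u i) - f x - (u i - x) • c‖ := norm_sub_le _ _
      _ ≤ ε / 2 * ‖v i - x‖ + ε / 2 * ‖u i - x‖ := add_le_add hvi hui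
      _ = ε / 2 * ‖v i - u i‖ := by
        rw [Real.norm_of_nonneg (sub_nonneg.mpr (hxv i)),
          Real.norm_of_nonpos (sub_nonpos.mpr (hux i)), Real.norm_of_nonneg hpos.le]
        ring
  rw [dist_eq_norm]
  exact (le_of_mul_le_mul_left (by linarith) hpos).trans_lt (half_lt_self hε)

theorem eVariationOn_Icc_eq_top_of_not_differentiableAt {V : Type*} [NormedAddCommGroup V]
    [NormedSpace ℝ V] [FiniteDimensional ℝ V] {f : ℝ → V} {a b : ℝ} (hab : a < b)
    (hf : ∀ x ∈ Ioo a b, ¬ DifferentiableAt ℝ f x) : eVariationOn f (Icc a b) = ⊤ := by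
  by_contra hbv
  have hdiff : ∀ᵐ x, x ∈ uIcc a b → DifferentiableAt ℝ f x :=
    BoundedVariationOn.ae_differentiableAt_of_mem_uIcc (by rwa [uIcc_of_le hab.le])
  rw [ae_iff] at hdiff
  have hnull : volume (Ioo a b) = 0 := by
    refine measure_mono_null ?_ hdiff
    intro x hx hxd
    exact hf x hx (hxd (Ioo_subset_Icc_self.trans Icc_subset_uIcc hx))
  simp only [Real.volume_Ioo, ENNReal.ofReal_eq_zero, sub_nonpos] at hnull
  exact hnull.not_gt hab

section FloorRing

variable {α : Type*} [Field α] [LinearOrder α] [IsStrictOrderedRing α] [FloorRing α]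

theorem mem_Ico_floor_mul_div {q : α} (hq : 0 < q) (x : α) :
    x ∈ Ico (⌊q * x⌋ / q) ((⌊q * x⌋ + 1) / q) := by
  rw [mem_Ico, div_le_iff₀' hq, lt_div_iff₀' hq]
  exact ⟨Int.floor_le _, Int.lt_floor_add_one _⟩

theorem Int.floor_le_floor_natCast_mul_div {q : ℕ} (hq : 0 < q) (y : α) :
    (⌊y⌋ : α) ≤ ⌊q * y⌋ / q := by
  have hq' : (0 : α) < q := by exact_mod_cast hq
  rw [le_div_iff₀ hq']
  have : ((⌊y⌋ * q : ℤ) : α) ≤ q * y := by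
    push_cast
    nlinarith [Int.floor_le y]
  exact_mod_cast Int.le_floor.mpr this

theorem Int.floor_natCast_mul_add_one_div_le {q : ℕ} (hq : 0 < q) (y : α) :
    ((⌊q * y⌋ : α) + 1) / q ≤ ⌊y⌋ + 1 := by
  have hq' : (0 : α) < q := by exact_mod_cast hq
  rw [div_le_iff₀ hq']
  have : (q : α) * y < ((⌊y⌋ + 1) * q : ℤ) := by
    push_cast
    nlinarith [Int.lt_floor_add_one y]
  exact_mod_cast Int.add_one_le_of_lt (Int.floor_lt.mpr this)

theorem min_sub_le_abs_sub_intCast (y : α) (k z : ℤ) : min (y - k) (k + 1 - y) ≤ |y - z| := by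
  rcases le_or_gt z k with h | h
  · have h' : (z : α) ≤ k := by exact_mod_cast h
    exact (min_le_left _ _).trans (le_trans (by linarith) (le_abs_self _))
  · have h' : (k : α) + 1 ≤ z := by exact_mod_cast h
    exact (min_le_right _ _).trans (le_trans (by linarith) (neg_le_abs _))

-- `(j + 1) / 2` is integer division: the integer nearest to every point of `[j/2, (j+1)/2]`.
theorem abs_sub_round_eq_of_mem_Icc (j : ℤ) {y : α} (hy : y ∈ Icc ((j : α) / 2) ((j + 1) / 2)) :
    |y - round y| = (-1) ^ j * (y - ((j + 1) / 2 : ℤ)) := by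
  have hlower := min_sub_le_abs_sub_intCast y (j / 2) (round y)
  obtain ⟨k, rfl | rfl⟩ := Int.even_or_odd' j
  · rw [show (2 * k + 1) / 2 = k by omega, Even.neg_one_zpow ⟨k, two_mul k⟩, one_mul]
    rw [show 2 * k / 2 = k by omega] at hlower
    push_cast at hy
    refine le_antisymm ((round_le y k).trans_eq (abs_of_nonneg (by linarith [hy.1]))) ?_
    rwa [min_eq_left (by linarith [hy.2])] at hlower
  · rw [show (2 * k + 1 + 1) / 2 = k + 1 by omega, Odd.neg_one_zpow ⟨k, rfl⟩, neg_one_mul, neg_sub]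
    rw [show (2 * k + 1) / 2 = k by omega] at hlower
    push_cast at hy ⊢
    refine le_antisymm ((round_le y (k + 1)).trans_eq ?_) ?_
    · rw [abs_sub_comm]
      push_cast
      exact abs_of_nonneg (by linarith [hy.2])
    · rwa [min_eq_right (by linarith [hy.1])] at hlower

theorem abs_sub_round_sub_abs_sub_round (j : ℤ) {u v : α}
    (hu : u ∈ Icc ((j : α) / 2) ((j + 1) / 2)) (hv : v ∈ Icc ((j : α) / 2) ((j + 1) / 2)) :
    |v - round v| - |u - round u| = (-1) ^ j * (v - u) := by
  rw [abs_sub_round_eq_of_mem_Icc j hu, abs_sub_round_eq_of_mem_Icc j hv]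
  ring

end FloorRing

theorem takagi_intCast_div_two_pow (k : ℤ) (N : ℕ) :
    takagi ((k : ℝ) / 2 ^ N) = ∑ n ∈ Finset.range N,
      (2:ℝ)⁻¹ ^ n * |2 ^ n * ((k : ℝ) / 2 ^ N) - round (2 ^ n * ((k : ℝ) / 2 ^ N))| := by
  unfold takagi
  refine tsum_eq_sum fun n hn ↦ ?_
  obtain ⟨p, rfl⟩ := Nat.exists_eq_add_of_le (not_lt.mp (Finset.mem_range.not.mp hn))
  have hint : (2:ℝ) ^ (N + p) * (k / 2 ^ N) = ((2 ^ p * k : ℤ) : ℝ) := by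
    push_cast
    field_simp
    ring
  rw [hint, round_intCast, sub_self, abs_zero, mul_zero]

theorem takagi_summand_increment (x : ℝ) {n N : ℕ} (hnN : n < N) :
    (2:ℝ)⁻¹ ^ n * |2 ^ n * (((⌊2 ^ N * x⌋ : ℝ) + 1) / 2 ^ N)
        - round (2 ^ n * (((⌊2 ^ N * x⌋ : ℝ) + 1) / 2 ^ N))|
      - (2:ℝ)⁻¹ ^ n * |2 ^ n * ((⌊2 ^ N * x⌋ : ℝ) / 2 ^ N)
        - round (2 ^ n * ((⌊2 ^ N * x⌋ : ℝ) / 2 ^ N))|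
      = (-1 : ℝ) ^ ⌊2 ^ (n + 1) * x⌋ / 2 ^ N := by
  obtain ⟨p, rfl⟩ := Nat.exists_eq_add_of_lt hnN
  set y := 2 ^ (n + 1) * x
  have hfloor : ⌊2 ^ (n + p + 1) * x⌋ = ⌊((2 ^ p : ℕ) : ℝ) * y⌋ := by
    congr 1
    push_cast
    ring
  have hscale : ∀ t : ℝ, 2 ^ n * (t / 2 ^ (n + p + 1)) = t / ((2 ^ p : ℕ) : ℝ) / 2 := fun t ↦ by
    push_cast
    field_simp
    ring
  rw [hfloor, hscale, hscale, ← mul_sub]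
  -- the level-`N` dyadic interval containing `x` lies in the level-`(n + 1)` one, on which the
  -- `n`-th summand is affine
  set k := ⌊((2 ^ p : ℕ) : ℝ) * y⌋
  have hlo := Int.floor_le_floor_natCast_mul_div (Nat.two_pow_pos p) y
  have hhi := Int.floor_natCast_mul_add_one_div_le (Nat.two_pow_pos p) y
  have hmono : (k : ℝ) / (2 ^ p : ℕ) ≤ ((k : ℝ) + 1) / (2 ^ p : ℕ) :=
    div_le_div_of_nonneg_right (by linarith) (by positivity)
  rw [abs_sub_round_sub_abs_sub_round ⌊y⌋ ⟨by linarith, by linarith⟩ ⟨by linarith, by linarith⟩,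
    inv_pow]
  push_cast
  field_simp
  ring

theorem takagi_slope_dyadic (x : ℝ) (N : ℕ) :
    slope takagi ((⌊2 ^ N * x⌋ : ℝ) / 2 ^ N) (((⌊2 ^ N * x⌋ : ℝ) + 1) / 2 ^ N)
      = ∑ n ∈ Finset.range N, (-1 : ℝ) ^ ⌊2 ^ (n + 1) * x⌋ := by
  have hsucc := takagi_intCast_div_two_pow (⌊2 ^ N * x⌋ + 1) N
  push_cast at hsucc
  rw [slope_def_field, hsucc, takagi_intCast_div_two_pow, ← Finset.sum_sub_distrib,
    Finset.sum_congr rfl fun n hn ↦ takagi_summand_increment x (Finset.mem_range.mp hn),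
    ← Finset.sum_div, add_div, add_sub_cancel_left, div_div_div_cancel_right₀ (by positivity),
    div_one]

theorem takagi_not_differentiableAt (x : ℝ) : ¬ DifferentiableAt ℝ takagi x := by
  intro h
  set D : ℕ → ℝ := fun N ↦ ∑ n ∈ Finset.range N, (-1 : ℝ) ^ ⌊2 ^ (n + 1) * x⌋
  have hmem : ∀ N : ℕ, x ∈ Ico ((⌊2 ^ N * x⌋ : ℝ) / 2 ^ N) (((⌊2 ^ N * x⌋ : ℝ) + 1) / 2 ^ N) :=
    fun N ↦ mem_Ico_floor_mul_div (by positivity) x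
  have hlen : Tendsto (fun N : ℕ ↦ ((⌊2 ^ N * x⌋ : ℝ) + 1) / 2 ^ N - (⌊2 ^ N * x⌋ : ℝ) / 2 ^ N)
      atTop (𝓝 0) := by
    simpa [← sub_div, ← inv_pow] using
      tendsto_pow_atTop_nhds_zero_of_lt_one (r := (2:ℝ)⁻¹) (by norm_num) (by norm_num)
  have hD : Tendsto D atTop (𝓝 (deriv takagi x)) := by
    simpa only [takagi_slope_dyadic] using h.hasDerivAt.tendsto_slope_of_le_of_le
      (fun N ↦ (hmem N).1) (fun N ↦ (hmem N).2.le) (fun N ↦ (hmem N).1.trans_lt (hmem N).2) hlen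
  have hstep : Tendsto (fun N ↦ |D (N + 1) - D N|) atTop (𝓝 0) := by
    simpa using ((hD.comp (tendsto_add_atTop_nat 1)).sub hD).abs
  have hone : ∀ N, |D (N + 1) - D N| = 1 := fun N ↦ by
    simp only [D, Finset.sum_range_succ, add_sub_cancel_left, abs_neg_one_zpow]
  simp only [hone] at hstep
  exact one_ne_zero (tendsto_nhds_unique tendsto_const_nhds hstep)

/-- The Takagi function has infinite total variation on every nondegenerate
subinterval of `[0,1]`. -/
theorem takagi_infinite_variation :
    ∀ a b : ℝ, 0 ≤ a → a < b → b ≤ 1 → eVariationOn takagi (Set.Icc a b) = ⊤ :=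
  fun _ _ _ hab _ ↦
    eVariationOn_Icc_eq_top_of_not_differentiableAt hab fun x _ ↦ takagi_not_differentiableAt x
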